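/- arXiv:2411.13911 — 2 statements merged into one kernel-verified Lean document; each statement's English description precedes it below -/
import Mathlib

section
/- Let V be a complex vector space of dimension g ≥ 1 and set N = g(g−1)/2. There exists a linear isomorphism Φ : ⋀^N(⋀²V) → (⋀^g V)^{⊗(g−1)} such that for EVERY ordered basis e₁, …, e_g of V, Φ sends the lexicographically ordered wedge (e₁∧e₂) ∧ (e₁∧e₃) ∧ ⋯ ∧ (e₁∧e_g) ∧ (e₂∧e₃) ∧ ⋯ ∧ (e_{g−1}∧e_g) to (e₁∧⋯∧e_g) ⊗ ⋯ ⊗ (e₁∧⋯∧e_g) (tensor product of g−1 copies); in particular the assignment on one basis is independent of the chosen basis. -/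
open ExteriorAlgebra
open scoped TensorProduct

/-- The wedge `v 0 ∧ v 1 ∧ ⋯ ∧ v (n-1)`, as an element of the `n`-th exterior power
`⋀[R]^n M` (a submodule of the exterior algebra). -/
noncomputable def wedgeElem (R : Type*) [CommRing R] {M : Type*} [AddCommGroup M] [Module R M]
    (n : ℕ) (v : Fin n → M) : ⋀[R]^n M :=
  ⟨ExteriorAlgebra.ιMulti R n v, ExteriorAlgebra.ιMulti_range R n ⟨v, rfl⟩⟩

/-!
Fix a basis `e₀` of `V` and let `B₀` be the basis `(e₀ i ∧ e₀ j)_{i<j}` of `⋀² V`, in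
lexicographic order. The determinants with respect to `B₀` and to `e₀` identify both
`⋀^N (⋀² V)` and `(⋀^g V)^{⊗(g-1)}` with `ℂ`, and `Φ` is the composite identification.
For another basis `e = f ∘ e₀`, the two sides of the claimed identity are then `det (⋀² f)` and
`(det f)^(g-1)`. These agree: both are multiplicative in `f`, so it suffices to treat diagonal
maps (`⋀² f` is diagonal with eigenvalues `dᵢ dⱼ`, and each `dᵢ` occurs `g - 1` times) and
transvections (`⋀² f` is unipotent). Finally, the lexicographic enumeration of the pairs is
unique, so `Φ` does not depend on it.
-/

open Module

theorem wedgeElem_eq_ιMulti (R : Type*) [CommRing R] {M : Type*} [AddCommGroup M] [Module R M]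
    (n : ℕ) (v : Fin n → M) : wedgeElem R n v = exteriorPower.ιMulti R n v :=
  rfl

namespace exteriorPower

variable {R M : Type*} [CommRing R] [AddCommGroup M] [Module R M]

theorem ιMulti_two_apply_coe (x y : M) :
    (ιMulti R 2 ![x, y] : ExteriorAlgebra R M) = ι R x * ι R y := by
  simp [ExteriorAlgebra.ιMulti_apply]

theorem ιMulti_eq_det_smul {n : ℕ} (b : Basis (Fin n) R M) (v : Fin n → M) :
    ιMulti R n v = b.det v • ιMulti R n b := by
  have h : ιMulti R n = (LinearMap.toSpanSingleton R _ (ιMulti R n b)).compAlternatingMap b.det := by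
    refine Basis.ext_alternating b fun i hi => ?_
    let σ : Equiv.Perm (Fin n) := Equiv.ofBijective i (Finite.injective_iff_bijective.1 hi)
    change ιMulti R n (b ∘ σ) = b.det (b ∘ σ) • ιMulti R n b
    simp [AlternatingMap.map_perm, b.det_self]
  exact congr($h v)

open Set.powersetCard in
theorem map_ιMulti_family_of_apply_eq_smul {n : ℕ} {ι : Type*} [LinearOrder ι] {v : ι → M}
    {f : M →ₗ[R] M} {d : ι → R} (h : ∀ i, f (v i) = d i • v i) (s : Set.powersetCard ι n) :
    map n f (ιMulti_family R n v s) = (∏ i ∈ s.val, d i) • ιMulti_family R n v s := by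
  have hprod : ∏ k, d (ofFinEmbEquiv.symm s k) = ∏ i ∈ s.val, d i := by
    rw [← Finset.prod_image fun _ _ _ _ h => (ofFinEmbEquiv.symm s).injective h]
    exact congr(∏ i ∈ $(Finset.image_orderEmbOfFin_univ s.val s.prop), d i)
  rw [← hprod, ιMulti_family, map_apply_ιMulti, ← AlternatingMap.map_smul_univ]
  congr 1
  ext k
  simp [h]

end exteriorPower

namespace Module.Basis

variable {R M : Type*} [CommRing R] [AddCommGroup M] [Module R M] {n : ℕ}

noncomputable def topExteriorPowerEquiv (b : Basis (Fin n) R M) : ⋀[R]^n M ≃ₗ[R] R :=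
  LinearEquiv.ofLinearMap (exteriorPower.alternatingMapLinearEquiv b.det)
    (LinearMap.toSpanSingleton R _ (exteriorPower.ιMulti R n b))
    (by ext; simp [b.det_self])
    (by ext v; simp [← exteriorPower.ιMulti_eq_det_smul])

@[simp]
theorem topExteriorPowerEquiv_ιMulti (b : Basis (Fin n) R M) (v : Fin n → M) :
    b.topExteriorPowerEquiv (exteriorPower.ιMulti R n v) = b.det v := by
  simp [topExteriorPowerEquiv]

noncomputable def tensorPowerTopExteriorPowerEquiv (b : Basis (Fin n) R M) (m : ℕ) :
    (⨂[R] _ : Fin m, ⋀[R]^n M) ≃ₗ[R] R :=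
  (PiTensorProduct.congr fun _ => b.topExteriorPowerEquiv).trans
    (PiTensorProduct.constantBaseRingEquiv (Fin m) R).toLinearEquiv

theorem tensorPowerTopExteriorPowerEquiv_tprod (b : Basis (Fin n) R M) (m : ℕ) (v : Fin n → M) :
    b.tensorPowerTopExteriorPowerEquiv m
      (PiTensorProduct.tprod R fun _ => exteriorPower.ιMulti R n v) = b.det v ^ m := by
  simp [tensorPowerTopExteriorPowerEquiv]

end Module.Basis

namespace LinearMap

theorem det_eq_prod_of_apply_basis_eq_smul {R M ι : Type*} [CommRing R] [AddCommGroup M]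
    [Module R M] [Fintype ι] [DecidableEq ι] (b : Basis ι R M) {f : M →ₗ[R] M} {c : ι → R}
    (h : ∀ i, f (b i) = c i • b i) : LinearMap.det f = ∏ i, c i := by
  rw [← LinearMap.det_toMatrix b, ← Matrix.det_diagonal]
  congr 1
  ext i j
  by_cases hij : i = j <;> simp [LinearMap.toMatrix_apply, h, hij]

theorem det_one_add_of_isNilpotent {R M : Type*} [CommRing R] [IsDomain R] [AddCommGroup M]
    [Module R M] [Module.Free R M] [Module.Finite R M] {D : Module.End R M} (hD : IsNilpotent D) :
    LinearMap.det (1 + D) = 1 := by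
  have h := congr(Polynomial.eval 1 $(hD.neg.charpoly_eq_X_pow_finrank))
  rwa [LinearMap.eval_charpoly, Polynomial.eval_pow, Polynomial.eval_X, one_pow, map_one,
    sub_neg_eq_add] at h

theorem toMatrix_transvection_smul_coord {R M n : Type*} [CommRing R] [AddCommGroup M]
    [Module R M] [Fintype n] [DecidableEq n] (b : Basis n R M) (i j : n) (c : R) :
    LinearMap.toMatrix b b (LinearMap.transvection (c • b.coord j) (b i)) =
      Matrix.transvection i j c := by
  ext x y
  by_cases hxy : x = y <;> by_cases hix : i = x <;> by_cases hjy : j = y <;>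
    simp [LinearMap.toMatrix_apply, LinearMap.transvection.apply, Matrix.transvection,
      Matrix.single_apply, Finsupp.single_apply, hxy, hix, hjy, eq_comm]

end LinearMap

theorem Finset.prod_powersetCard_prod {α β : Type*} [Fintype α] [DecidableEq α] [CommMonoid β]
    {n : ℕ} (hn : 1 ≤ n) (d : α → β) :
    ∏ s ∈ (univ : Finset α).powersetCard n, ∏ i ∈ s, d i
      = ∏ i, d i ^ (Fintype.card α - 1).choose (n - 1) := by
  rw [Finset.prod_comm' (s' := fun i => ((univ : Finset α).powersetCard n).filter (i ∈ ·))
    (t' := univ) fun s i => by simp]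
  refine Finset.prod_congr rfl fun i _ => ?_
  rw [Finset.prod_const]
  congr 1
  simpa using card_filter_powersetCard_subset {i} (univ : Finset α) n (by simp) (by simpa)

namespace exteriorPower

theorem det_map_of_apply_basis_eq_smul {R M ι : Type*} [CommRing R] [AddCommGroup M] [Module R M]
    [Fintype ι] [LinearOrder ι] {n : ℕ} (hn : 1 ≤ n) (b : Basis ι R M) {f : M →ₗ[R] M}
    {d : ι → R} (h : ∀ i, f (b i) = d i • b i) :
    LinearMap.det (map n f) = (∏ i, d i) ^ (Fintype.card ι - 1).choose (n - 1) := by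
  rw [LinearMap.det_eq_prod_of_apply_basis_eq_smul (b.exteriorPower n)
      (c := fun s => ∏ i ∈ s.val, d i)
      fun s => by simpa using map_ιMulti_family_of_apply_eq_smul h s,
    ← Finset.prod_subtype ((Finset.univ : Finset ι).powersetCard n) (by simp [Set.powersetCard])
      fun s => ∏ i ∈ s, d i,
    Finset.prod_powersetCard_prod hn, Finset.prod_pow]

theorem det_map_two_transvection {R M : Type*} [CommRing R] [IsDomain R] [AddCommGroup M]
    [Module R M] [Module.Free R M] [Module.Finite R M] {f : Dual R M} {v : M} (hfv : f v = 0) :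
    LinearMap.det (map 2 (LinearMap.transvection f v)) = 1 := by
  set D := map 2 (LinearMap.transvection f v) - 1
  have hD (x y : M) :
      D (ιMulti R 2 ![x, y]) = ιMulti R 2 ![f x • v, y] + ιMulti R 2 ![x, f y • v] := by
    apply Subtype.ext
    have hcomp : LinearMap.transvection f v ∘ ![x, y] = ![x + f x • v, y + f y • v] := by
      ext i
      fin_cases i <;> rfl
    simp only [D, LinearMap.sub_apply, map_apply_ιMulti, hcomp, Module.End.one_apply,
      Submodule.coe_sub, Submodule.coe_add, ιMulti_two_apply_coe, map_add, map_smul, add_mul,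
      mul_add, smul_mul_assoc, mul_smul_comm, ι_sq_zero, smul_zero, add_zero]
    abel
  -- `D` maps every `x ∧ y` into `v ∧ M`, which it kills since `f v = 0` and `v ∧ v = 0`.
  have hDD : D * D = 0 := by
    ext w
    rw [show w = ![w 0, w 1] from List.ofFn_inj.mp rfl]
    simp [hD, hfv]
  rw [← add_sub_cancel 1 (map 2 (LinearMap.transvection f v))]
  exact LinearMap.det_one_add_of_isNilpotent ⟨2, by rw [sq, hDD]⟩

theorem det_map_two {K M : Type*} [Field K] [AddCommGroup M] [Module K M] [FiniteDimensional K M]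
    (f : M →ₗ[K] M) :
    LinearMap.det (map 2 f) = LinearMap.det f ^ (finrank K M - 1) := by
  set b := finBasis K M
  suffices ∀ A, LinearMap.det (map 2 (Matrix.toLin b b A)) = A.det ^ (finrank K M - 1) by
    simpa using this (LinearMap.toMatrix b b f)
  intro A
  induction A using Matrix.diagonal_transvection_induction with
  | hdiag d _ =>
    rw [det_map_of_apply_basis_eq_smul one_le_two b
      fun i => (hasEigenvector_toLin_diagonal d i b).apply_eq_smul]
    simp
  | htransvec t =>
    obtain ⟨i, j, hij, c⟩ := t
    rw [Matrix.TransvectionStruct.det, one_pow, Matrix.TransvectionStruct.toMatrix_mk,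
      ← LinearMap.toMatrix_transvection_smul_coord b, Matrix.toLin_toMatrix]
    exact det_map_two_transvection (by simp [hij])
  | hmul A B hA hB =>
    rw [Matrix.toLin_mul b b b, map_comp, LinearMap.det_comp, hA, hB, Matrix.det_mul, mul_pow]

end exteriorPower

def OrderEmbedding.finTwoEquiv (ι : Type*) [Preorder ι] :
    {q : ι × ι // q.1 < q.2} ≃ (Fin 2 ↪o ι) where
  toFun q := OrderEmbedding.ofStrictMono ![q.1.1, q.1.2]
    (Fin.strictMono_iff_lt_succ.2 fun i => by fin_cases i; exact q.2)
  invFun φ := ⟨(φ 0, φ 1), φ.strictMono Fin.zero_lt_one⟩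
  left_inv _ := rfl
  right_inv φ := by
    ext i
    fin_cases i <;> rfl

theorem Nat.card_subtype_fst_lt_snd (α : Type*) [LinearOrder α] :
    Nat.card {q : α × α // q.1 < q.2} = (Nat.card α).choose 2 := by
  rw [Nat.card_congr ((OrderEmbedding.finTwoEquiv α).trans Set.powersetCard.ofFinEmbEquiv),
    Set.powersetCard.card]

theorem exists_strictMono_toLex_range_eq_pairs {α : Type*} [Fintype α] [LinearOrder α] {N : ℕ}
    (hN : N = (Fintype.card α).choose 2) :
    ∃ p : Fin N → α × α, StrictMono (fun k => toLex (p k)) ∧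
      ∀ q, q ∈ Set.range p ↔ q.1 < q.2 := by
  classical
  set T := (Finset.univ.filter fun q : α × α => q.1 < q.2).map toLex.toEmbedding
  have hT : T.card = N := by
    rw [Finset.card_map, ← Fintype.card_subtype, Fintype.card_eq_nat_card,
      Nat.card_subtype_fst_lt_snd, Nat.card_eq_fintype_card, hN]
  refine ⟨fun k => ofLex (T.orderEmbOfFin hT k), (T.orderEmbOfFin hT).strictMono, fun q => ?_⟩
  have hmem : toLex q ∈ Set.range (T.orderEmbOfFin hT) ↔ q.1 < q.2 := by
    rw [Finset.range_orderEmbOfFin]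
    simp [T]
  rw [← hmem]
  exact ⟨fun ⟨k, hk⟩ => ⟨k, congr(toLex $hk)⟩, fun ⟨k, hk⟩ => ⟨k, congr(ofLex $hk)⟩⟩

theorem eq_of_strictMono_toLex_of_range_eq {α : Type*} [LinearOrder α] {N : ℕ}
    {p p' : Fin N → α × α} (hp : StrictMono fun k => toLex (p k))
    (hp' : StrictMono fun k => toLex (p' k)) (hrange : Set.range p = Set.range p') : p = p' := by
  have := (hp.range_inj hp').1 (by simp only [Set.range_comp' toLex, hrange])
  exact funext fun k => congr(ofLex ($this k))

namespace Module.Basis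

section CommRing

variable {R M ι κ : Type*} [CommRing R] [AddCommGroup M] [Module R M] [LinearOrder ι]

noncomputable def wedgePairs (b : Basis ι R M) (p : κ → ι × ι) (hp : Function.Injective p)
    (hrange : ∀ q, q ∈ Set.range p ↔ q.1 < q.2) : Basis κ R (⋀[R]^2 M) :=
  (b.exteriorPower 2).reindex ((Equiv.ofInjective p hp).trans (Equiv.subtypeEquivRight hrange)
    |>.trans (OrderEmbedding.finTwoEquiv ι) |>.trans Set.powersetCard.ofFinEmbEquiv).symm

theorem wedgePairs_apply (b : Basis ι R M) (p : κ → ι × ι) (hp : Function.Injective p)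
    (hrange : ∀ q, q ∈ Set.range p ↔ q.1 < q.2) (k : κ) :
    b.wedgePairs p hp hrange k = exteriorPower.ιMulti R 2 ![b (p k).1, b (p k).2] := by
  simp only [wedgePairs, Equiv.symm_trans, coe_reindex, exteriorPower.coe_basis, Equiv.symm_symm,
    Equiv.coe_trans, Function.comp_apply, exteriorPower.ιMulti_family, Equiv.ofInjective_apply,
    Equiv.symm_apply_apply]
  congr 1
  ext i
  fin_cases i <;> rfl

end CommRing

theorem det_wedgePairs {K M ι κ : Type*} [Field K] [AddCommGroup M] [Module K M] [LinearOrder ι]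
    [Fintype ι] [Fintype κ] [DecidableEq κ] (e₀ e : Basis ι K M) (p : κ → ι × ι)
    (hp : Function.Injective p) (hrange : ∀ q, q ∈ Set.range p ↔ q.1 < q.2) :
    (e₀.wedgePairs p hp hrange).det (e.wedgePairs p hp hrange) =
      e₀.det e ^ (Fintype.card ι - 1) := by
  have := Module.Finite.of_basis e₀
  set f := (e₀.equiv e (Equiv.refl ι)).toLinearMap
  have hf : ⇑(e.wedgePairs p hp hrange) = exteriorPower.map 2 f ∘ e₀.wedgePairs p hp hrange := by
    ext k
    have hvec : ![e (p k).1, e (p k).2] = f ∘ ![e₀ (p k).1, e₀ (p k).2] := by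
      ext i
      fin_cases i <;> simp [f]
    simp only [Function.comp_apply, wedgePairs_apply, exteriorPower.map_apply_ιMulti, hvec]
  rw [hf, det_comp, det_self, mul_one, exteriorPower.det_map_two, det_basis,
    finrank_eq_card_basis e₀]

end Module.Basis

theorem exists_linearEquiv_exteriorPower_of_exteriorPower_two_general
    (V : Type*) [AddCommGroup V] [Module ℂ V] [FiniteDimensional ℂ V]
    (g N : ℕ) (hdim : Module.finrank ℂ V = g) (hN : N = g * (g - 1) / 2) :
    ∃ Φ : (⋀[ℂ]^N (⋀[ℂ]^2 V)) ≃ₗ[ℂ] (⨂[ℂ] _i : Fin (g - 1), (⋀[ℂ]^g V)),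
      ∀ (e : Module.Basis (Fin g) ℂ V) (p : Fin N → Fin g × Fin g),
        StrictMono (fun k : Fin N => toLex (p k)) →
        (∀ q : Fin g × Fin g, q ∈ Set.range p ↔ q.1 < q.2) →
        Φ (wedgeElem ℂ N (fun k => wedgeElem ℂ 2 ![e (p k).1, e (p k).2]))
          = PiTensorProduct.tprod ℂ (fun _ : Fin (g - 1) => wedgeElem ℂ g (fun i => e i)) := by
  obtain ⟨p₀, hmono₀, hrange₀⟩ := exists_strictMono_toLex_range_eq_pairs (α := Fin g) (N := N)
    (by rw [hN, Fintype.card_fin, Nat.choose_two_right])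
  let e₀ : Basis (Fin g) ℂ V := (finBasis ℂ V).reindex (finCongr hdim)
  let B₀ := e₀.wedgePairs p₀ hmono₀.injective.of_comp hrange₀
  refine ⟨B₀.topExteriorPowerEquiv.trans (e₀.tensorPowerTopExteriorPowerEquiv (g - 1)).symm,
    fun e p hmono hrange => ?_⟩
  obtain rfl : p = p₀ := eq_of_strictMono_toLex_of_range_eq hmono hmono₀
    (Set.ext fun q => (hrange q).trans (hrange₀ q).symm)
  have hpairs : (fun k => wedgeElem ℂ 2 ![e (p k).1, e (p k).2]) =
      e.wedgePairs p hmono₀.injective.of_comp hrange₀ :=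
    funext fun k => (e.wedgePairs_apply _ _ _ k).symm
  rw [LinearEquiv.trans_apply, LinearEquiv.symm_apply_eq, wedgeElem_eq_ιMulti, hpairs,
    Basis.topExteriorPowerEquiv_ιMulti, Basis.det_wedgePairs, Fintype.card_fin]
  exact (e₀.tensorPowerTopExteriorPowerEquiv_tprod (g - 1) e).symm

/-- Let `V` be a complex vector space of dimension `g ≥ 1` and
`N = g(g-1)/2`.  There is a linear isomorphism
`Φ : ⋀^N (⋀² V) ≃ (⋀^g V)^{⊗(g-1)}` such that for every ordered basis `e₁, …, e_g` of `V`,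
`Φ` sends the lexicographically ordered wedge
`(e₁∧e₂) ∧ (e₁∧e₃) ∧ ⋯ ∧ (e₁∧e_g) ∧ (e₂∧e₃) ∧ ⋯ ∧ (e_{g-1}∧e_g)` to
`(e₁∧⋯∧e_g) ⊗ ⋯ ⊗ (e₁∧⋯∧e_g)` (tensor product of `g-1` copies).  (The lexicographic
enumeration is encoded by quantifying over all `p : Fin N → Fin g × Fin g` that are strictly
monotone for the lexicographic order and whose range is exactly the set of pairs `(i,j)`
with `i < j`.) -/
theorem exists_linearEquiv_exteriorPower_of_exteriorPower_two
    (V : Type*) [AddCommGroup V] [Module ℂ V] [FiniteDimensional ℂ V]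
    (g N : ℕ) (hg : 1 ≤ g) (hdim : Module.finrank ℂ V = g) (hN : N = g * (g - 1) / 2) :
    ∃ Φ : (⋀[ℂ]^N (⋀[ℂ]^2 V)) ≃ₗ[ℂ] (⨂[ℂ] _i : Fin (g - 1), (⋀[ℂ]^g V)),
      ∀ (e : Module.Basis (Fin g) ℂ V) (p : Fin N → Fin g × Fin g),
        StrictMono (fun k : Fin N => toLex (p k)) →
        (∀ q : Fin g × Fin g, q ∈ Set.range p ↔ q.1 < q.2) →
        Φ (wedgeElem ℂ N (fun k => wedgeElem ℂ 2 ![e (p k).1, e (p k).2]))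
          = PiTensorProduct.tprod ℂ (fun _ : Fin (g - 1) => wedgeElem ℂ g (fun i => e i)) :=
  exists_linearEquiv_exteriorPower_of_exteriorPower_two_general V g N hdim hN
end

section
/- Let V, V', W, W' be finite-dimensional complex inner product spaces, with dim V = dim V' = dim W = dim W' = m ≥ 1. Let φ : V → V' and ψ : W → W' be ℂ-linear isomorphisms, and let c : V → W and c' : V' → W' be conjugate-linear isomorphisms satisfying ⟨c(x), c(y)⟩_W = ⟨y, x⟩_V for all x, y ∈ V and ⟨c'(x'), c'(y')⟩_{W'} = ⟨y', x'⟩_{V'} for all x', y' ∈ V'. Assume the diagram commutes: ψ ∘ c = c' ∘ φ. Then for every basis (α₁, …, α_m) of V and every basis (β₁, …, β_m) of W, det(⟨φ(α_i), φ(α_j)⟩) · det(⟨β_i, β_j⟩) = det(⟨ψ(β_i), ψ(β_j)⟩) · det(⟨α_i, α_j⟩). (This is the linear-algebra core of the paper's lemma that the metric discrepancy functions satisfy c̃₁(φ) = c̃₁(ψ) for the Hodge-bundle isomorphisms φ and ψ.) -/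
/-! Write `βᵢ = c γᵢ` with `γᵢ = c⁻¹ βᵢ ∈ V`; then `ψ βᵢ = c' (φ γᵢ)`. Since `c` and `c'` transpose
Gram matrices, the claim becomes `det G(φ α) · det G(γ) = det G(φ γ) · det G(α)`. Expanding `γ` in
the basis `α` with coefficient matrix `M` gives `G(γ) = M̄ G(α) Mᵀ` and `G(φ γ) = M̄ G(φ α) Mᵀ`, so
both sides equal `det M̄ · det G(φ α) · det G(α) · det M`. -/

open Matrix
open scoped ComplexInnerProductSpace

namespace Matrix

open scoped InnerProductSpace

variable {𝕜 E F ι n : Type*} [RCLike 𝕜]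
  [SeminormedAddCommGroup E] [InnerProductSpace 𝕜 E]
  [SeminormedAddCommGroup F] [InnerProductSpace 𝕜 F]

theorem gram_sum_smul [Fintype ι] (M : Matrix n ι 𝕜) (v : ι → E) :
    gram 𝕜 (fun i ↦ ∑ k, M i k • v k) = M.map star * gram 𝕜 v * Mᵀ := by
  ext i j
  simp only [gram_apply, mul_apply, map_apply, transpose_apply, sum_inner, inner_sum,
    inner_smul_left, inner_smul_right, Finset.sum_mul, Finset.mul_sum, starRingEnd_apply]
  exact Finset.sum_congr rfl fun k _ ↦ Finset.sum_congr rfl fun l _ ↦ by ring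

theorem gram_comp_eq_transpose {c : E → F} (hc : ∀ x y, ⟪c x, c y⟫_𝕜 = ⟪y, x⟫_𝕜) (v : n → E) :
    gram 𝕜 (c ∘ v) = (gram 𝕜 v)ᵀ :=
  Matrix.ext fun i j ↦ hc (v i) (v j)

theorem det_gram_comp_mul_det_gram [Fintype ι] [DecidableEq ι] (f : E →ₗ[𝕜] F)
    (b : Module.Basis ι 𝕜 E) (v : ι → E) :
    (gram 𝕜 (f ∘ v)).det * (gram 𝕜 b).det = (gram 𝕜 (f ∘ b)).det * (gram 𝕜 v).det := by
  obtain ⟨M, rfl⟩ : ∃ M : Matrix ι ι 𝕜, v = fun i ↦ ∑ k, M i k • b k :=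
    ⟨of fun i k ↦ b.repr (v i) k, funext fun i ↦ (b.sum_repr (v i)).symm⟩
  have hfv : (f ∘ fun i ↦ ∑ k, M i k • b k) = fun i ↦ ∑ k, M i k • (f ∘ b) k :=
    funext fun i ↦ by simp only [Function.comp_apply, map_sum, map_smul]
  rw [hfv, gram_sum_smul M (f ∘ b), gram_sum_smul M b]
  simp only [det_mul]
  ring

end Matrix

theorem gram_det_mul_eq_of_conjugateLinear_commute_general
    {V V' W W' : Type*}
    [NormedAddCommGroup V] [InnerProductSpace ℂ V]
    [NormedAddCommGroup V'] [InnerProductSpace ℂ V']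
    [NormedAddCommGroup W] [InnerProductSpace ℂ W]
    [NormedAddCommGroup W'] [InnerProductSpace ℂ W']
    (m : ℕ)
    (φ : V ≃ₗ[ℂ] V') (ψ : W ≃ₗ[ℂ] W')
    (c : V ≃ₗ⋆[ℂ] W) (c' : V' ≃ₗ⋆[ℂ] W')
    (hc : ∀ x y : V, ⟪c x, c y⟫ = ⟪y, x⟫)
    (hc' : ∀ x' y' : V', ⟪c' x', c' y'⟫ = ⟪y', x'⟫)
    (hcomm : ∀ x : V, ψ (c x) = c' (φ x))
    (α : Module.Basis (Fin m) ℂ V) (β : Module.Basis (Fin m) ℂ W) :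
    (Matrix.of fun i j : Fin m => ⟪φ (α i), φ (α j)⟫).det
        * (Matrix.of fun i j : Fin m => ⟪β i, β j⟫).det
      = (Matrix.of fun i j : Fin m => ⟪ψ (β i), ψ (β j)⟫).det
        * (Matrix.of fun i j : Fin m => ⟪α i, α j⟫).det := by
  set γ : Fin m → V := fun i ↦ c.symm (β i)
  have hβ : ⇑β = c ∘ γ := funext fun i ↦ (c.apply_symm_apply (β i)).symm
  have hψβ : ψ ∘ β = c' ∘ φ ∘ γ := by
    rw [hβ]
    exact funext fun i ↦ hcomm (γ i)
  change (gram ℂ (φ ∘ α)).det * (gram ℂ β).det = (gram ℂ (ψ ∘ β)).det * (gram ℂ α).det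
  rw [hψβ, hβ, gram_comp_eq_transpose hc', gram_comp_eq_transpose hc, det_transpose,
    det_transpose]
  exact (det_gram_comp_mul_det_gram (φ : V →ₗ[ℂ] V') α γ).symm

/-- Let `V, V', W, W'` be finite-dimensional complex inner product spaces,
all of dimension `m ≥ 1`.  Let `φ : V → V'` and `ψ : W → W'` be ℂ-linear isomorphisms and
let `c : V → W`, `c' : V' → W'` be conjugate-linear isomorphisms satisfying
`⟪c x, c y⟫ = ⟪y, x⟫` and `⟪c' x', c' y'⟫ = ⟪y', x'⟫`.  If the diagram commutes,
`ψ ∘ c = c' ∘ φ`, then for every basis `(α₁, …, α_m)` of `V` and every basis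
`(β₁, …, β_m)` of `W`,
`det(⟪φ αᵢ, φ αⱼ⟫) · det(⟪βᵢ, βⱼ⟫) = det(⟪ψ βᵢ, ψ βⱼ⟫) · det(⟪αᵢ, αⱼ⟫)`. -/
theorem gram_det_mul_eq_of_conjugateLinear_commute
    {V V' W W' : Type*}
    [NormedAddCommGroup V] [InnerProductSpace ℂ V] [FiniteDimensional ℂ V]
    [NormedAddCommGroup V'] [InnerProductSpace ℂ V'] [FiniteDimensional ℂ V']
    [NormedAddCommGroup W] [InnerProductSpace ℂ W] [FiniteDimensional ℂ W]
    [NormedAddCommGroup W'] [InnerProductSpace ℂ W'] [FiniteDimensional ℂ W']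
    (m : ℕ) (hm : 1 ≤ m)
    (hV : Module.finrank ℂ V = m) (hV' : Module.finrank ℂ V' = m)
    (hW : Module.finrank ℂ W = m) (hW' : Module.finrank ℂ W' = m)
    (φ : V ≃ₗ[ℂ] V') (ψ : W ≃ₗ[ℂ] W')
    (c : V ≃ₗ⋆[ℂ] W) (c' : V' ≃ₗ⋆[ℂ] W')
    (hc : ∀ x y : V, ⟪c x, c y⟫ = ⟪y, x⟫)
    (hc' : ∀ x' y' : V', ⟪c' x', c' y'⟫ = ⟪y', x'⟫)
    (hcomm : ∀ x : V, ψ (c x) = c' (φ x))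
    (α : Module.Basis (Fin m) ℂ V) (β : Module.Basis (Fin m) ℂ W) :
    (Matrix.of fun i j : Fin m => ⟪φ (α i), φ (α j)⟫).det
        * (Matrix.of fun i j : Fin m => ⟪β i, β j⟫).det
      = (Matrix.of fun i j : Fin m => ⟪ψ (β i), ψ (β j)⟫).det
        * (Matrix.of fun i j : Fin m => ⟪α i, α j⟫).det :=
  gram_det_mul_eq_of_conjugateLinear_commute_general m φ ψ c c' hc hc' hcomm α β
end
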